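/- Let X be a weighted sequence of length n ≥ 1 over a finite alphabet Σ, let z ≥ 1 and c > 0 be reals, and let k be a positive integer with k ≥ (c+2)·z·ln(nz). Let S_1,…,S_k be independent random strings, each of length n, drawn from the product distribution determined by X. Then with probability at least 1 − 1/(nz)^c, for every position i ∈ {1,…,n} and every string P with P_X(P,i) ≥ 1/z there exists an index j ∈ {1,…,k} such that S_j[i..i+|P|−1] = P. -/
import Mathlib


open scoped Classical
open Finset

variable {α : Type*}

/-- Matching probability `P_X(P,i)` of pattern `P` at (1-based) position `i`
in a weighted sequence of length `n` with letter probabilities `p`. -/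
def matchProb (n : ℕ) (p : ℕ → α → ℝ) : List α → ℕ → ℝ
  | [], _ => 1
  | c :: P, i => if i ≤ n then p i c * matchProb n p P (i + 1) else 0

/-- `p` describes a weighted sequence of length `n`: at each position `i ∈ {1,…,n}`
the letter probabilities are nonnegative and sum to 1. -/
def IsWeighted [Fintype α] (n : ℕ) (p : ℕ → α → ℝ) : Prop :=
  ∀ i, 1 ≤ i → i ≤ n → (∀ c, 0 ≤ p i c) ∧ ∑ c, p i c = 1

/-- A property array for strings of length `n`:
`π i ∈ {i-1,…,n}` for `i ∈ {1,…,n}` and `π` is nondecreasing on `{1,…,n}`. -/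
def IsPropertyArray (n : ℕ) (π : ℕ → ℕ) : Prop :=
  (∀ i, 1 ≤ i → i ≤ n → i - 1 ≤ π i ∧ π i ≤ n) ∧
    ∀ i, 1 ≤ i → i + 1 ≤ n → π i ≤ π (i + 1)

/-- The factor `S[i..j]` (1-based, empty when `j < i`). -/
def factor (S : List α) (i j : ℕ) : List α := (S.drop (i - 1)).take (j + 1 - i)

/-- `i ∈ Occ_π(P,S)`: `P = S[i..i+|P|-1]` and `i+|P|-1 ≤ π i`. -/
def occursAt (S : List α) (π : ℕ → ℕ) (P : List α) (i : ℕ) : Prop :=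
  factor S i (i + P.length - 1) = P ∧ i + P.length - 1 ≤ π i

/-- `Count_𝒮(P,i)`: number of members of the family in which `P` occurs at `i`
respecting the property. -/
noncomputable def countOcc {k : ℕ} (S : Fin k → List α) (π : Fin k → ℕ → ℕ)
    (P : List α) (i : ℕ) : ℕ :=
  (Finset.univ.filter fun j => occursAt (S j) (π j) P i).card

/-- `P` is compatible with `Q` if `P = ε` or `P = cQ'` for a letter `c` and a prefix `Q'` of `Q`. -/
def Compatible (P Q : List α) : Prop :=
  P = [] ∨ ∃ (c : α) (Q' : List α), Q' <+: Q ∧ P = c :: Q'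

/-- A random string `S : Fin n → α` matches pattern `P` at (1-based) position `i`. -/
def Matches {n : ℕ} (S : Fin n → α) (P : List α) (i : ℕ) : Prop :=
  ((List.ofFn S).drop (i - 1)).take P.length = P

/-- The probability of the outcome `S` under the product distribution determined by `p`. -/
def strWeight (n : ℕ) (p : ℕ → α → ℝ) (S : Fin n → α) : ℝ :=
  ∏ j : Fin n, p ((j : ℕ) + 1) (S j)

section Aux
variable [Fintype α]

lemma matchProb_nonneg {n : ℕ} {p : ℕ → α → ℝ} (hp : IsWeighted n p) :
    ∀ (P : List α) (i : ℕ), 1 ≤ i → 0 ≤ matchProb n p P i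
  | [], i, _ => by simp [matchProb]
  | c :: P, i, hi => by
    rw [matchProb]
    split
    · exact mul_nonneg ((hp i hi ‹i ≤ n›).1 c)
        (matchProb_nonneg hp P (i + 1) (by omega))
    · exact le_refl 0

lemma matchProb_eq_zero {n : ℕ} {p : ℕ → α → ℝ} :
    ∀ (P : List α) (i : ℕ), P ≠ [] → n < i + P.length - 1 → matchProb n p P i = 0
  | [], _, h, _ => absurd rfl h
  | c :: P, i, _, hbig => by
    rw [matchProb]
    split
    · rcases eq_or_ne P [] with h | h
      · subst h; simp at hbig; omega
      · rw [matchProb_eq_zero P (i + 1) h (by simp at hbig ⊢; omega), mul_zero]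
    · rfl

lemma matchProb_prod {n : ℕ} {p : ℕ → α → ℝ} :
    ∀ (P : List α) (i : ℕ), 1 ≤ i → i - 1 + P.length ≤ n →
      matchProb n p P i = ∏ t : Fin P.length, p (i + t) (P.get t)
  | [], i, _, _ => by simp [matchProb]
  | c :: P, i, hi, hle => by
    rw [matchProb, if_pos (by simp at hle; omega)]
    rw [matchProb_prod P (i + 1) (by omega) (by simp at hle ⊢; omega)]
    show p i c * ∏ t : Fin P.length, p (i + 1 + (t : ℕ)) (P.get t)
       = ∏ t : Fin (P.length + 1), p (i + (t : ℕ)) ((c :: P).get t)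
    rw [Fin.prod_univ_succ]
    simp only [List.get_cons_succ, Fin.val_succ, List.get_cons_zero, Fin.val_zero, add_zero]
    congr 1
    refine Finset.prod_congr rfl fun t _ => ?_
    congr 1
    omega

lemma strWeight_nonneg {n : ℕ} {p : ℕ → α → ℝ} (hp : IsWeighted n p) (S : Fin n → α) :
    0 ≤ strWeight n p S :=
  Finset.prod_nonneg fun j _ => (hp ((j : ℕ) + 1) (by omega) (by omega)).1 (S j)

lemma sum_strWeight_pi {n : ℕ} {p : ℕ → α → ℝ} (t : Fin n → Finset α) :
    ∑ S ∈ Fintype.piFinset t, strWeight n p S = ∏ j : Fin n, ∑ a ∈ t j, p ((j : ℕ) + 1) a :=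
  (Finset.prod_univ_sum t fun j a => p ((j : ℕ) + 1) a).symm

lemma sum_strWeight {n : ℕ} {p : ℕ → α → ℝ} (hp : IsWeighted n p) :
    ∑ S : Fin n → α, strWeight n p S = 1 := by
  have h := sum_strWeight_pi (n := n) (p := p) (fun _ => (univ : Finset α))
  rw [Fintype.piFinset_univ] at h
  rw [h]
  refine Finset.prod_eq_one fun j _ => (hp ((j : ℕ) + 1) (by omega) (by omega)).2

lemma matches_iff {n : ℕ} {S : Fin n → α} {P : List α} {i : ℕ} (hi : 1 ≤ i)
    (hle : i - 1 + P.length ≤ n) :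
    Matches S P i ↔ ∀ (t : ℕ) (ht : t < P.length),
      S ⟨i - 1 + t, by omega⟩ = P.get ⟨t, ht⟩ := by
  unfold Matches
  have hlen : (((List.ofFn S).drop (i - 1)).take P.length).length = P.length := by
    simp; omega
  constructor
  · intro h t ht
    have h2 : t < (((List.ofFn S).drop (i - 1)).take P.length).length := by
      rw [hlen]; exact ht
    have := List.getElem_of_eq h h2
    simpa [List.get_eq_getElem, List.getElem_take, List.getElem_drop] using this
  · intro h
    apply List.ext_getElem hlen
    intro t h1 h2
    simpa [List.getElem_take, List.getElem_drop] using h t h2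

set_option linter.unusedSectionVars false

lemma sum_matches {n : ℕ} {p : ℕ → α → ℝ} (hp : IsWeighted n p)
    (P : List α) (i : ℕ) (hi : 1 ≤ i) :
    ∑ S ∈ univ.filter (fun S : Fin n → α => Matches S P i), strWeight n p S
      = matchProb n p P i := by
  rcases eq_or_ne P [] with rfl | hP
  · have : (univ.filter (fun S : Fin n → α => Matches S [] i)) = univ := by
      refine Finset.filter_true_of_mem fun S _ => ?_
      simp [Matches]
    rw [this, matchProb]
    exact sum_strWeight hp
  by_cases hle : i - 1 + P.length ≤ n
  · -- the window fits
    set t : Fin n → Finset α := fun j =>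
      if h2 : i - 1 ≤ (j : ℕ) ∧ (j : ℕ) < i - 1 + P.length
      then {P.get ⟨(j : ℕ) - (i - 1), by omega⟩} else univ with ht
    have hset : (univ.filter (fun S : Fin n → α => Matches S P i)) = Fintype.piFinset t := by
      ext S
      simp only [Finset.mem_filter, Finset.mem_univ, true_and, Fintype.mem_piFinset]
      rw [matches_iff hi hle]
      constructor
      · intro h j
        simp only [ht]
        by_cases h2 : i - 1 ≤ (j : ℕ) ∧ (j : ℕ) < i - 1 + P.length
        · rw [dif_pos h2, Finset.mem_singleton]
          have h3 := h ((j : ℕ) - (i - 1)) (by omega)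
          have h4 : (⟨i - 1 + ((j : ℕ) - (i - 1)), by omega⟩ : Fin n) = j := by
            ext; simp; omega
          rw [h4] at h3
          exact h3
        · rw [dif_neg h2]; exact Finset.mem_univ _
      · intro h s hs
        have hj := h ⟨i - 1 + s, by omega⟩
        simp only [ht] at hj
        rw [dif_pos (by simp; omega), Finset.mem_singleton] at hj
        convert hj using 2
        ext; simp
    rw [hset, sum_strWeight_pi]
    have hfac : ∀ j : Fin n, (∑ a ∈ t j, p ((j : ℕ) + 1) a) =
        if h2 : i - 1 ≤ (j : ℕ) ∧ (j : ℕ) < i - 1 + P.length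
        then p ((j : ℕ) + 1) (P.get ⟨(j : ℕ) - (i - 1), by omega⟩) else 1 := by
      intro j
      simp only [ht]
      by_cases h2 : i - 1 ≤ (j : ℕ) ∧ (j : ℕ) < i - 1 + P.length
      · rw [dif_pos h2, dif_pos h2, Finset.sum_singleton]
      · rw [dif_neg h2, dif_neg h2]
        exact (hp ((j : ℕ) + 1) (by omega) (by omega)).2
    rw [Finset.prod_congr rfl fun j _ => hfac j]
    -- restrict product to the window
    set W : Finset (Fin n) :=
      (univ : Finset (Fin P.length)).image
        (fun s : Fin P.length => (⟨i - 1 + (s : ℕ), by omega⟩ : Fin n)) with hW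
    rw [← Finset.prod_subset (Finset.subset_univ W) (fun j _ hj => by
      rw [dif_neg]
      intro h2
      exact hj (by
        rw [hW, Finset.mem_image]
        exact ⟨⟨(j : ℕ) - (i - 1), by omega⟩, Finset.mem_univ _, by ext; simp; omega⟩))]
    rw [hW, Finset.prod_image (by
      intro a _ b _ hab
      have : i - 1 + (a : ℕ) = i - 1 + (b : ℕ) := congrArg Fin.val hab
      exact Fin.ext (by omega))]
    rw [matchProb_prod P i hi hle]
    refine Finset.prod_congr rfl fun s _ => ?_
    rw [dif_pos (by first | (simp; omega) | simp | omega)]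
    have h1 : i - 1 + (s : ℕ) + 1 = i + (s : ℕ) := by omega
    have h2 : i - 1 + (s : ℕ) - (i - 1) = (s : ℕ) := by omega
    simp only [h1, h2]
  · -- window does not fit: both sides are zero
    rw [matchProb_eq_zero P i hP (by
      have : P.length ≠ 0 := by simpa using hP
      omega)]
    rw [Finset.sum_eq_zero]
    intro S hS
    exfalso
    rw [Finset.mem_filter] at hS
    have hm := hS.2
    unfold Matches at hm
    have := congrArg List.length hm
    simp at this
    have : P.length ≠ 0 := by simpa using (fun h => hP (List.length_eq_zero_iff.mp h))
    omega

lemma sum_matchProb_ofFn {n : ℕ} {p : ℕ → α → ℝ} (hp : IsWeighted n p) :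
    ∀ (ℓ i : ℕ), 1 ≤ i →
      ∑ f : Fin ℓ → α, matchProb n p (List.ofFn f) i ≤ 1
  | 0, i, _ => by simp [matchProb]
  | ℓ + 1, i, hi => by
    by_cases hin : i ≤ n
    · have key : ∀ f : Fin (ℓ + 1) → α,
          matchProb n p (List.ofFn f) i
            = p i (f 0) * matchProb n p (List.ofFn fun s : Fin ℓ => f s.succ) (i + 1) := by
        intro f
        rw [List.ofFn_succ, matchProb, if_pos hin]
      calc ∑ f : Fin (ℓ + 1) → α, matchProb n p (List.ofFn f) i
          = ∑ f : Fin (ℓ + 1) → α,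
              p i (f 0) * matchProb n p (List.ofFn fun s : Fin ℓ => f s.succ) (i + 1) :=
            Finset.sum_congr rfl fun f _ => key f
        _ = ∑ cg : α × (Fin ℓ → α),
              p i cg.1 * matchProb n p (List.ofFn cg.2) (i + 1) := by
            symm
            apply Fintype.sum_equiv (Fin.consEquiv fun _ => α)
            intro cg
            obtain ⟨c, g⟩ := cg
            simp [Fin.consEquiv_apply, Fin.cons_succ, Fin.cons_zero]
        _ = (∑ c : α, p i c) * ∑ g : Fin ℓ → α, matchProb n p (List.ofFn g) (i + 1) := by
            rw [Finset.sum_mul_sum]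
            exact Fintype.sum_prod_type'
              (f := fun c g => p i c * matchProb n p (List.ofFn g) (i + 1))
        _ ≤ 1 := by
            rw [(hp i hi hin).2, one_mul]
            exact sum_matchProb_ofFn hp ℓ (i + 1) (by omega)
    · have : ∀ f : Fin (ℓ + 1) → α, matchProb n p (List.ofFn f) i = 0 := by
        intro f
        rw [List.ofFn_succ, matchProb, if_neg hin]
      rw [Finset.sum_congr rfl fun f _ => this f, Finset.sum_const, smul_zero]
      norm_num

/-- all lists of length ℓ -/
noncomputable def listsOf (ℓ : ℕ) : Finset (List α) :=
  (univ : Finset (Fin ℓ → α)).image List.ofFn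

lemma mem_listsOf {ℓ : ℕ} {P : List α} (h : P.length = ℓ) : P ∈ listsOf (α := α) ℓ := by
  subst h
  exact Finset.mem_image.mpr ⟨P.get, Finset.mem_univ _, List.ofFn_get P⟩

lemma length_of_mem_listsOf {ℓ : ℕ} {P : List α} (h : P ∈ listsOf (α := α) ℓ) :
    P.length = ℓ := by
  rcases Finset.mem_image.mp h with ⟨f, _, rfl⟩
  simp

lemma card_heavy {n : ℕ} {p : ℕ → α → ℝ} (hp : IsWeighted n p) {z : ℝ} (hz : 0 < z)
    (ℓ i : ℕ) (hi : 1 ≤ i) :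
    ((listsOf (α := α) ℓ).filter (fun P => 1 / z ≤ matchProb n p P i)).card ≤ z := by
  have hsum : ∑ P ∈ (listsOf (α := α) ℓ).filter (fun P => 1 / z ≤ matchProb n p P i),
      matchProb n p P i ≤ 1 := by
    refine le_trans (Finset.sum_le_sum_of_subset_of_nonneg (Finset.filter_subset _ _)
      fun P hP _ => matchProb_nonneg hp P i hi) ?_
    rw [listsOf, Finset.sum_image (fun a _ b _ h => List.ofFn_injective h)]
    exact sum_matchProb_ofFn hp ℓ i hi
  have hcard := Finset.card_nsmul_le_sum
    ((listsOf (α := α) ℓ).filter (fun P => 1 / z ≤ matchProb n p P i))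
    (fun P => matchProb n p P i) (1 / z) (fun P hP => (Finset.mem_filter.mp hP).2)
  rw [nsmul_eq_mul] at hcard
  have h2 : (((listsOf (α := α) ℓ).filter
      (fun P => 1 / z ≤ matchProb n p P i)).card : ℝ) * (1 / z) ≤ 1 := le_trans hcard hsum
  rw [mul_one_div, div_le_one hz] at h2
  exact h2

lemma sum_biUnion_le' {β γ : Type*} (f : β → ℝ) (hf : ∀ b, 0 ≤ f b)
    (s : Finset γ) (E : γ → Finset β) :
    ∑ b ∈ s.biUnion E, f b ≤ ∑ g ∈ s, ∑ b ∈ E g, f b := by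
  induction s using Finset.induction_on with
  | empty => simp
  | @insert a s' hx ih =>
    rw [Finset.sum_insert hx, Finset.biUnion_insert]
    calc ∑ b ∈ E a ∪ s'.biUnion E, f b
        ≤ ∑ b ∈ E a, f b + ∑ b ∈ s'.biUnion E \ E a, f b := by
          rw [← Finset.sum_union Finset.disjoint_sdiff]
          exact Finset.sum_le_sum_of_subset_of_nonneg
            (by intro b hb
                rcases Finset.mem_union.mp hb with h | h
                · exact Finset.mem_union_left _ h
                · by_cases hEa : b ∈ E a
                  · exact Finset.mem_union_left _ hEa
                  · exact Finset.mem_union_right _ (Finset.mem_sdiff.mpr ⟨h, hEa⟩))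
            (fun b _ _ => hf b)
      _ ≤ ∑ b ∈ E a, f b + ∑ b ∈ s'.biUnion E, f b := by
          have h3 : ∑ b ∈ s'.biUnion E \ E a, f b ≤ ∑ b ∈ s'.biUnion E, f b :=
            Finset.sum_le_sum_of_subset_of_nonneg Finset.sdiff_subset fun b _ _ => hf b
          linarith
      _ ≤ ∑ b ∈ E a, f b + ∑ g ∈ s', ∑ b ∈ E g, f b := by linarith [ih]

/-- union bound -/
lemma union_bound {β γ : Type*} (f : β → ℝ) (hf : ∀ b, 0 ≤ f b)
    (s : Finset γ) (E : γ → Finset β) (B : Finset β)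
    (h : ∀ b ∈ B, ∃ g ∈ s, b ∈ E g) :
    ∑ b ∈ B, f b ≤ ∑ g ∈ s, ∑ b ∈ E g, f b := by
  have h1 : B ⊆ s.biUnion E := by
    intro b hb
    rcases h b hb with ⟨g, hg, hbg⟩
    exact Finset.mem_biUnion.mpr ⟨g, hg, hbg⟩
  exact le_trans (Finset.sum_le_sum_of_subset_of_nonneg h1 fun b _ _ => hf b)
    (sum_biUnion_le' f hf s E)

lemma sum_prod_piFinset' {n : ℕ} (p : ℕ → α → ℝ) (k : ℕ) (A : Finset (Fin n → α)) :
    ∑ T ∈ Fintype.piFinset (fun _ : Fin k => A), ∏ j, strWeight n p (T j)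
      = (∑ S ∈ A, strWeight n p S) ^ k := by
  have h := Finset.prod_univ_sum (fun _ : Fin k => A) (fun _ S => strWeight n p S)
  rw [← h, Finset.prod_const, Finset.card_univ, Fintype.card_fin]

lemma final_bound (n : ℕ) (hn : 1 ≤ n) (z c : ℝ) (hz : 1 ≤ z) (hc : 0 < c)
    (k : ℕ) (hk : 0 < k) (hkbig : (c + 2) * z * Real.log ((n : ℝ) * z) ≤ (k : ℝ)) :
    (n : ℝ) * ((n : ℝ) * (z * (1 - 1 / z) ^ k)) ≤ ((n : ℝ) * z) ^ (-c) := by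
  set N : ℝ := (n : ℝ) with hN
  have hN1 : 1 ≤ N := by rw [hN]; exact_mod_cast hn
  have hz0 : 0 < z := lt_of_lt_of_le one_pos hz
  have hx : (0 : ℝ) < N * z := by positivity
  have h1 : (0 : ℝ) ≤ 1 - 1 / z := by
    have : 1 / z ≤ 1 := by rw [div_le_one hz0]; exact hz
    linarith
  have step1 : (1 - 1 / z) ^ k ≤ Real.exp (-((k : ℝ) / z)) := by
    have h2 : 1 - 1 / z ≤ Real.exp (-(1 / z)) := by
      have := Real.add_one_le_exp (-(1 / z)); linarith
    calc (1 - 1 / z) ^ k ≤ (Real.exp (-(1 / z))) ^ k := pow_le_pow_left₀ h1 h2 k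
      _ = Real.exp ((k : ℝ) * (-(1 / z))) := by rw [← Real.exp_nat_mul]
      _ = Real.exp (-((k : ℝ) / z)) := by rw [mul_neg, mul_one_div]
  have step2 : Real.exp (-((k : ℝ) / z)) ≤ Real.exp (-((c + 2) * Real.log (N * z))) := by
    apply Real.exp_le_exp.mpr
    have : (c + 2) * Real.log (N * z) ≤ (k : ℝ) / z := by
      rw [le_div_iff₀ hz0]
      nlinarith [hkbig]
    linarith
  have step3 : Real.exp (-((c + 2) * Real.log (N * z))) = (N * z) ^ (-(c + 2)) := by
    rw [Real.rpow_def_of_pos hx]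
    congr 1
    ring
  have key : N * N * z * (N * z) ^ (-(c + 2)) = (N * z) ^ (-c) * z⁻¹ := by
    have e1 : (N * z) ^ (-(c + 2)) = (N * z) ^ (-c) * (((N * z) ^ (2 : ℕ) : ℝ))⁻¹ := by
      rw [show -(c + 2) = -c + (-2 : ℝ) by ring, Real.rpow_add hx]
      congr 1
      rw [show ((-2 : ℝ)) = -((2 : ℕ) : ℝ) by norm_num, Real.rpow_neg hx.le,
        Real.rpow_natCast]
    rw [e1]
    have hNne : N ≠ 0 := by positivity
    have hzne : z ≠ 0 := ne_of_gt hz0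
    have hxne : (((N * z) ^ (2 : ℕ) : ℝ)) ≠ 0 := by positivity
    field_simp
  have hxc : (0 : ℝ) < (N * z) ^ (-c) := Real.rpow_pos_of_pos hx _
  calc N * (N * (z * (1 - 1 / z) ^ k))
      = N * N * z * (1 - 1 / z) ^ k := by ring
    _ ≤ N * N * z * Real.exp (-((k : ℝ) / z)) := by
        have hnz : (0 : ℝ) ≤ N * N * z := by positivity
        exact mul_le_mul_of_nonneg_left step1 hnz
    _ ≤ N * N * z * (N * z) ^ (-(c + 2)) := by
        have hnz : (0 : ℝ) ≤ N * N * z := by positivity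
        rw [← step3]
        exact mul_le_mul_of_nonneg_left step2 hnz
    _ = (N * z) ^ (-c) * z⁻¹ := key
    _ ≤ (N * z) ^ (-c) := by
        have : z⁻¹ ≤ 1 := by
          rw [inv_eq_one_div, div_le_one hz0]; exact hz
        nlinarith

noncomputable def heavyF (n : ℕ) (p : ℕ → α → ℝ) (z : ℝ) (i ℓ : ℕ) : Finset (List α) :=
  (listsOf (α := α) ℓ).filter (fun P => 1 / z ≤ matchProb n p P i)

noncomputable def HF (n : ℕ) (p : ℕ → α → ℝ) (z : ℝ) (i : ℕ) : Finset (List α) :=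
  (Finset.range (n + 1)).biUnion (heavyF n p z i)

end Aux

/-- sampling `k ≥ (c+2)·z·ln(nz)` independent random strings from `X`,
with probability at least `1 − (nz)^{-c}` every solid factor (probability ≥ 1/z)
occurs in one of the sampled strings. -/
theorem random_sampling_covers_solid_factors [Fintype α]
    (n : ℕ) (hn : 1 ≤ n) (p : ℕ → α → ℝ) (hp : IsWeighted n p)
    (z c : ℝ) (hz : 1 ≤ z) (hc : 0 < c) (k : ℕ) (hk : 0 < k)
    (hkbig : (c + 2) * z * Real.log ((n : ℝ) * z) ≤ (k : ℝ)) :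
    1 - ((n : ℝ) * z) ^ (-c) ≤
      ∑ T ∈ Finset.univ.filter (fun T : Fin k → Fin n → α =>
          ∀ (i : ℕ), 1 ≤ i → i ≤ n → ∀ P : List α,
            1 / z ≤ matchProb n p P i → ∃ j, Matches (T j) P i),
        ∏ j, strWeight n p (T j) := by
  have hz0 : (0 : ℝ) < z := lt_of_lt_of_le one_pos hz
  have hB0 : (0 : ℝ) ≤ 1 - 1 / z := by
    have : 1 / z ≤ 1 := by rw [div_le_one hz0]; exact hz
    linarith
  have hW0 : ∀ T : Fin k → Fin n → α, 0 ≤ ∏ j, strWeight n p (T j) :=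
    fun T => Finset.prod_nonneg fun j _ => strWeight_nonneg hp (T j)
  have hWsum : ∑ T : Fin k → Fin n → α, ∏ j, strWeight n p (T j) = 1 := by
    have h := sum_prod_piFinset' p k (univ : Finset (Fin n → α))
    rw [Fintype.piFinset_univ] at h
    rw [h, sum_strWeight hp, one_pow]
  have hqle : ∀ (i : ℕ), 1 ≤ i → ∀ P : List α, matchProb n p P i ≤ 1 := by
    intro i hi P
    rw [← sum_matches hp P i hi, ← sum_strWeight hp]
    exact Finset.sum_le_sum_of_subset_of_nonneg (Finset.filter_subset _ _)
      fun S _ _ => strWeight_nonneg hp S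
  have hevent : ∀ (i : ℕ), 1 ≤ i → ∀ P : List α,
      ∑ T ∈ univ.filter (fun T : Fin k → Fin n → α => ∀ j, ¬ Matches (T j) P i),
        ∏ j, strWeight n p (T j) = (1 - matchProb n p P i) ^ k := by
    intro i hi P
    have hA : (univ.filter (fun T : Fin k → Fin n → α => ∀ j, ¬ Matches (T j) P i))
        = Fintype.piFinset (fun _ : Fin k =>
            univ.filter (fun S : Fin n → α => ¬ Matches S P i)) := by
      ext T
      simp [Fintype.mem_piFinset]
    rw [hA, sum_prod_piFinset']
    congr 1
    have hsplit := Finset.sum_filter_add_sum_filter_not (univ : Finset (Fin n → α))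
      (fun S => Matches S P i) (strWeight n p)
    have hm := sum_matches hp P i hi
    have htot := sum_strWeight hp
    linarith
  have hpoint : ∀ (i : ℕ), 1 ≤ i → i ≤ n →
      ∑ P ∈ HF n p z i, (1 - matchProb n p P i) ^ k
        ≤ (n : ℝ) * (z * (1 - 1 / z) ^ k) := by
    intro i hi1 hin
    have hdisj : (↑(Finset.range (n + 1)) : Set ℕ).PairwiseDisjoint (heavyF n p z i) := by
      intro a _ b _ hab
      simp only [Function.onFun]
      apply Finset.disjoint_left.mpr
      intro P hPa hPb
      have h1 := length_of_mem_listsOf (Finset.mem_filter.mp hPa).1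
      have h2 := length_of_mem_listsOf (Finset.mem_filter.mp hPb).1
      exact absurd (h1 ▸ h2) hab
    rw [HF, Finset.sum_biUnion hdisj, Finset.sum_range_succ']
    have h0 : ∑ P ∈ heavyF n p z i 0, (1 - matchProb n p P i) ^ k = 0 := by
      apply Finset.sum_eq_zero
      intro P hP
      have hlen : P.length = 0 := length_of_mem_listsOf (Finset.mem_filter.mp hP).1
      have hPnil : P = [] := List.length_eq_zero_iff.mp hlen
      subst hPnil
      rw [show matchProb n p [] i = 1 from rfl, sub_self, zero_pow hk.ne']
    rw [h0, add_zero]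
    have hterm : ∀ ℓ, ∑ P ∈ heavyF n p z i (ℓ + 1), (1 - matchProb n p P i) ^ k
        ≤ z * (1 - 1 / z) ^ k := by
      intro ℓ
      have hcard := card_heavy hp hz0 (ℓ + 1) i hi1
      have hbnd : ∀ P ∈ heavyF n p z i (ℓ + 1),
          (1 - matchProb n p P i) ^ k ≤ (1 - 1 / z) ^ k := by
        intro P hP
        have hq := (Finset.mem_filter.mp hP).2
        have hq1 := hqle i hi1 P
        exact pow_le_pow_left₀ (by linarith) (by linarith) k
      calc ∑ P ∈ heavyF n p z i (ℓ + 1), (1 - matchProb n p P i) ^ k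
          ≤ (heavyF n p z i (ℓ + 1)).card • ((1 - 1 / z) ^ k) :=
            Finset.sum_le_card_nsmul _ _ _ hbnd
        _ = ((heavyF n p z i (ℓ + 1)).card : ℝ) * (1 - 1 / z) ^ k := nsmul_eq_mul _ _
        _ ≤ z * (1 - 1 / z) ^ k :=
            mul_le_mul_of_nonneg_right hcard (pow_nonneg hB0 k)
    calc ∑ ℓ ∈ Finset.range n, ∑ P ∈ heavyF n p z i (ℓ + 1), (1 - matchProb n p P i) ^ k
        ≤ ∑ _ℓ ∈ Finset.range n, z * (1 - 1 / z) ^ k :=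
          Finset.sum_le_sum fun ℓ _ => hterm ℓ
      _ = (n : ℝ) * (z * (1 - 1 / z) ^ k) := by
          rw [Finset.sum_const, Finset.card_range, nsmul_eq_mul]
  have hbad : ∑ T ∈ univ.filter (fun T : Fin k → Fin n → α =>
      ¬ (∀ (i : ℕ), 1 ≤ i → i ≤ n → ∀ P : List α,
        1 / z ≤ matchProb n p P i → ∃ j, Matches (T j) P i)),
      ∏ j, strWeight n p (T j) ≤ ((n : ℝ) * z) ^ (-c) := by
    calc ∑ T ∈ univ.filter (fun T : Fin k → Fin n → α =>
          ¬ (∀ (i : ℕ), 1 ≤ i → i ≤ n → ∀ P : List α,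
            1 / z ≤ matchProb n p P i → ∃ j, Matches (T j) P i)),
          ∏ j, strWeight n p (T j)
        ≤ ∑ g ∈ (Finset.Icc 1 n).sigma (fun i => HF n p z i),
            ∑ T ∈ univ.filter (fun T : Fin k → Fin n → α =>
              ∀ j, ¬ Matches (T j) g.2 g.1),
              ∏ j, strWeight n p (T j) := by
          apply union_bound _ hW0
          intro T hT
          rw [Finset.mem_filter] at hT
          have hT := hT.2
          push_neg at hT
          obtain ⟨i, hi1, hin, P, hheavyP, hnomatch⟩ := hT
          refine ⟨⟨i, P⟩, ?_, ?_⟩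
          · refine Finset.mem_sigma.mpr ⟨Finset.mem_Icc.mpr ⟨hi1, hin⟩, ?_⟩
            rw [HF]
            refine Finset.mem_biUnion.mpr ⟨P.length, Finset.mem_range.mpr ?_, ?_⟩
            · rcases eq_or_ne P [] with rfl | hPne
              · simp
              · by_contra hlen
                push_neg at hlen
                have hzero : matchProb n p P i = 0 :=
                  matchProb_eq_zero P i hPne (by omega)
                rw [hzero] at hheavyP
                have : (0 : ℝ) < 1 / z := by positivity
                linarith
            · rw [heavyF]
              exact Finset.mem_filter.mpr ⟨mem_listsOf rfl, hheavyP⟩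
          · exact Finset.mem_filter.mpr ⟨Finset.mem_univ _, hnomatch⟩
      _ = ∑ i ∈ Finset.Icc 1 n, ∑ P ∈ HF n p z i, (1 - matchProb n p P i) ^ k := by
          rw [Finset.sum_sigma]
          exact Finset.sum_congr rfl fun i hi => Finset.sum_congr rfl fun P _ =>
            hevent i (Finset.mem_Icc.mp hi).1 P
      _ ≤ ∑ _i ∈ Finset.Icc 1 n, (n : ℝ) * (z * (1 - 1 / z) ^ k) :=
          Finset.sum_le_sum fun i hi =>
            hpoint i (Finset.mem_Icc.mp hi).1 (Finset.mem_Icc.mp hi).2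
      _ = (n : ℝ) * ((n : ℝ) * (z * (1 - 1 / z) ^ k)) := by
          rw [Finset.sum_const, Nat.card_Icc, Nat.add_sub_cancel, nsmul_eq_mul]
      _ ≤ ((n : ℝ) * z) ^ (-c) := final_bound n hn z c hz hc k hk hkbig
  have hsplit := Finset.sum_filter_add_sum_filter_not (univ : Finset (Fin k → Fin n → α))
    (fun T => ∀ (i : ℕ), 1 ≤ i → i ≤ n → ∀ P : List α,
      1 / z ≤ matchProb n p P i → ∃ j, Matches (T j) P i)
    (fun T => ∏ j, strWeight n p (T j))
  rw [hWsum] at hsplit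
  linarith
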